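/- arXiv:2001.04597 — 2 statements merged into one kernel-verified Lean document; each statement's English description precedes it below -/
import Mathlib

section
/- In the symmetric group S_6, let w_1 = 241635 and w_2 = 315264 (one-line notation). Then {1, w_1, w_2} is a complete disjoint system: w_1 and w_2 commute with the longest element w_o = 654321, and the set of all transpositions of S_6 is the disjoint union of S, w_1 S w_1^{-1}, and w_2 S w_2^{-1}, where S is the set of simple transpositions. -/
/-!
Conjugating the simple transposition `(i i+1)` by `w` gives `(w(i) w(i+1))`, so `w S w⁻¹` is the
edge set of the Hamiltonian path `w(0) – w(1) – ⋯ – w(5)` of the complete graph `K₆`, and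
transpositions are the edges of `K₆`. For `w = 1, w₁, w₂` these are the paths
`0-1-2-3-4-5`, `1-3-0-5-2-4` and `2-0-4-1-5-3`, the classical decomposition of the fifteen edges
of `K₆` into three Hamiltonian paths.
-/

open Equiv

/-- The set of simple transpositions of `S₆ = Perm (Fin 6)` (0-indexed). -/
def simplesS6 : Set (Perm (Fin 6)) :=
  {σ | ∃ i : Fin 5, σ = Equiv.swap i.castSucc i.succ}

/-- `w S w⁻¹` for a set `S` of permutations. -/
def conjSet (w : Perm (Fin 6)) (S : Set (Perm (Fin 6))) : Set (Perm (Fin 6)) :=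
  (fun s => w * s * w⁻¹) '' S

/-- The permutation `w₁ = 241635` of the paper, 0-indexed: the 6-cycle (0 1 3 5 4 2). -/
def w1S6 : Perm (Fin 6) := c[(0 : Fin 6), 1, 3, 5, 4, 2]

/-- The permutation `w₂ = 315264` of the paper, 0-indexed: the 6-cycle (0 2 4 5 3 1). -/
def w2S6 : Perm (Fin 6) := c[(0 : Fin 6), 2, 4, 5, 3, 1]

def pathSwaps (w : Perm (Fin 6)) : Set (Perm (Fin 6)) :=
  Set.range fun i : Fin 5 => swap (w i.castSucc) (w i.succ)

theorem simplesS6_eq_pathSwaps_one : simplesS6 = pathSwaps 1 := by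
  ext σ
  simp [simplesS6, pathSwaps, eq_comm]

theorem conjSet_simplesS6 (w : Perm (Fin 6)) : conjSet w simplesS6 = pathSwaps w := by
  rw [conjSet, simplesS6_eq_pathSwaps_one, pathSwaps, pathSwaps, ← Set.range_comp]
  simp only [Function.comp_def, Perm.one_apply, swap_apply_apply]

theorem isSwap_of_mem_pathSwaps {w σ : Perm (Fin 6)} (h : σ ∈ pathSwaps w) : σ.IsSwap := by
  obtain ⟨i, rfl⟩ := h
  exact Perm.swap_isSwap_iff.mpr (w.injective.ne Fin.castSucc_lt_succ.ne)

theorem setOf_isSwap_eq_pathSwaps_union :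
    {σ : Perm (Fin 6) | σ.IsSwap} = pathSwaps 1 ∪ pathSwaps w1S6 ∪ pathSwaps w2S6 := by
  refine subset_antisymm ?_ fun σ hσ => ?_
  · rintro _ ⟨x, y, hxy, rfl⟩
    simp only [pathSwaps, Set.mem_union, Set.mem_range]
    revert x y
    decide
  · rcases hσ with (h | h) | h <;> exact isSwap_of_mem_pathSwaps h

/-- `{1, w₁, w₂}` is a complete disjoint system in `S₆`: `w₁` and `w₂`
commute with the longest element `w₀` (the order-reversing permutation), and the set of
all transpositions is the disjoint union of `S`, `w₁ S w₁⁻¹` and `w₂ S w₂⁻¹`. -/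
theorem stmt4 :
    Commute w1S6 Fin.revPerm ∧ Commute w2S6 Fin.revPerm ∧
      {σ : Perm (Fin 6) | σ.IsSwap} =
        simplesS6 ∪ conjSet w1S6 simplesS6 ∪ conjSet w2S6 simplesS6 ∧
      Disjoint simplesS6 (conjSet w1S6 simplesS6) ∧
      Disjoint simplesS6 (conjSet w2S6 simplesS6) ∧
      Disjoint (conjSet w1S6 simplesS6) (conjSet w2S6 simplesS6) := by
  rw [conjSet_simplesS6, conjSet_simplesS6, simplesS6_eq_pathSwaps_one]
  refine ⟨Equiv.ext (by decide), Equiv.ext (by decide), setOf_isSwap_eq_pathSwaps_union, ?_⟩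
  simp only [pathSwaps, Set.disjoint_range_iff]
  decide
end

section
/- Let A be a connected Z_{≥0}-graded braided Hopf algebra in the Yetter–Drinfeld category over a Hopf algebra H, and suppose A is finite dimensional. If x is a nonzero left integral in A (i.e. zx = ε(z)x for all z ∈ A), then x is homogeneous of some degree m, A^m = k·x, A^{m'} = 0 for all m' > m, and x is also a right integral in A. -/
/-- `x` is a left integral: `z * x = ε(z) • x` for all `z`. -/
def IsLeftIntegral {k A : Type*} [CommSemiring k] [Ring A] [Algebra k A]
    (ε : A →ₐ[k] k) (x : A) : Prop := ∀ z : A, z * x = ε z • x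

/-- `x` is a right integral: `x * z = ε(z) • x` for all `z`. -/
def IsRightIntegral {k A : Type*} [CommSemiring k] [Ring A] [Algebra k A]
    (ε : A →ₐ[k] k) (x : A) : Prop := ∀ z : A, x * z = ε z • x

/-!
Finite dimensionality leaves only finitely many nonzero graded pieces, so there is a top
degree `N`. An element of degree `N` is killed on either side by everything of positive
degree (the product would land above `N`), while `A⁰ = k·1` acts through `ε`; hence every
element of `A^N` is a two-sided integral. Uniqueness of left integrals then forces
`A^N ≤ k·x`, and since `A^N ≠ 0` and `k·x` is a line, `A^N = k·x`.
-/

theorem DirectSum.IsInternal.exists_top_degree {R M : Type*} [Ring R] [AddCommGroup M]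
    [Module R M] [IsNoetherian R M] [Nontrivial M] {ndeg : ℕ → Submodule R M}
    (h : DirectSum.IsInternal ndeg) : ∃ N, ndeg N ≠ ⊥ ∧ ∀ m, N < m → ndeg m = ⊥ := by
  have hfin : {n | ndeg n ≠ ⊥}.Finite :=
    Submodule.finite_ne_bot_of_iSupIndep h.submodule_iSupIndep
  have hne : {n | ndeg n ≠ ⊥}.Nonempty := by
    by_contra hempty
    have : iSup ndeg = ⊥ := iSup_eq_bot.mpr fun n => not_not.mp fun hn => hempty ⟨n, hn⟩
    exact bot_ne_top (this ▸ h.submodule_iSup_eq_top)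
  obtain ⟨N, hN, hmax⟩ := Set.exists_max_image _ id hfin hne
  exact ⟨N, hN, fun m hm => not_not.mp fun hm' => (hmax m hm').not_gt hm⟩

theorem LinearMap.ext_on_iSup {R M M₂ ι : Type*} [Semiring R] [AddCommMonoid M] [Module R M]
    [AddCommMonoid M₂] [Module R M₂] {p : ι → Submodule R M} {f g : M →ₗ[R] M₂}
    (htop : iSup p = ⊤) (hfg : ∀ i, ∀ a ∈ p i, f a = g a) : f = g :=
  LinearMap.eqLocus_eq_top.mp <| top_le_iff.mp <| htop ▸ iSup_le fun i a ha => hfg i a ha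

section TopDegree

variable {k A : Type*} [CommSemiring k] [Ring A] [Algebra k A] {ndeg : ℕ → Submodule k A}
  {ε : A →ₐ[k] k} {N : ℕ}
  (hmul : ∀ (m n : ℕ) (a b : A), a ∈ ndeg m → b ∈ ndeg n → a * b ∈ ndeg (m + n))
  (hconn : ndeg 0 = Submodule.span k {(1 : A)}) (hε : ∀ n > 0, ∀ a ∈ ndeg n, ε a = 0)
  (hN : ∀ m, N < m → ndeg m = ⊥)
include hmul hconn hε hN

theorem mul_eq_counit_smul_of_mem_top_degree {n : ℕ} {y z : A} (hy : y ∈ ndeg N)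
    (hz : z ∈ ndeg n) : z * y = ε z • y ∧ y * z = ε z • y := by
  rcases Nat.eq_zero_or_pos n with rfl | hn
  · obtain ⟨c, rfl⟩ := Submodule.mem_span_singleton.mp (hconn ▸ hz)
    simp
  · have hzy : z * y ∈ ndeg (n + N) := hmul n N z y hz hy
    have hyz : y * z ∈ ndeg (N + n) := hmul N n y z hy hz
    rw [hN _ (by omega), Submodule.mem_bot] at hzy hyz
    rw [hzy, hyz, hε n hn z hz, zero_smul]
    exact ⟨rfl, rfl⟩

theorem isLeftIntegral_and_isRightIntegral_of_mem_top_degree (htop : iSup ndeg = ⊤) {y : A}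
    (hy : y ∈ ndeg N) : IsLeftIntegral ε y ∧ IsRightIntegral ε y := by
  have hleft : LinearMap.mulRight k y = ε.toLinearMap.smulRight y :=
    LinearMap.ext_on_iSup htop fun n z hz =>
      (mul_eq_counit_smul_of_mem_top_degree hmul hconn hε hN hy hz).1
  have hright : LinearMap.mulLeft k y = ε.toLinearMap.smulRight y :=
    LinearMap.ext_on_iSup htop fun n z hz =>
      (mul_eq_counit_smul_of_mem_top_degree hmul hconn hε hN hy hz).2
  exact ⟨fun z => LinearMap.congr_fun hleft z, fun z => LinearMap.congr_fun hright z⟩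

end TopDegree

theorem stmt9_general (k : Type*) [Field k] (A : Type*) [Ring A] [Algebra k A]
    (ndeg : ℕ → Submodule k A)
    (hinternal : DirectSum.IsInternal ndeg)
    (hmul : ∀ (m n : ℕ) (a b : A), a ∈ ndeg m → b ∈ ndeg n → a * b ∈ ndeg (m + n))
    (hconn : ndeg 0 = Submodule.span k {(1 : A)})
    (ε : A →ₐ[k] k)
    (hε : ∀ n > 0, ∀ a ∈ ndeg n, ε a = 0)
    [FiniteDimensional k A]
    (huniq : ∀ x y : A, IsLeftIntegral ε x → IsLeftIntegral ε y → x ≠ 0 →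
      ∃ c : k, y = c • x)
    (x : A) (hx0 : x ≠ 0) (hx : IsLeftIntegral ε x) :
    ∃ m : ℕ, x ∈ ndeg m ∧ ndeg m = Submodule.span k {x} ∧
      (∀ m' : ℕ, m < m' → ndeg m' = ⊥) ∧ IsRightIntegral ε x := by
  have : Nontrivial A := ⟨⟨x, 0, hx0⟩⟩
  obtain ⟨N, hNne, hN⟩ := hinternal.exists_top_degree
  have hintegral {y : A} (hy : y ∈ ndeg N) :=
    isLeftIntegral_and_isRightIntegral_of_mem_top_degree hmul hconn hε hN
      hinternal.submodule_iSup_eq_top hy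
  have hle : ndeg N ≤ Submodule.span k {x} := fun y hy => by
    obtain ⟨c, rfl⟩ := huniq x y hx (hintegral hy).1 hx0
    exact Submodule.smul_mem _ c (Submodule.mem_span_singleton_self x)
  have hNx : ndeg N = Submodule.span k {x} :=
    ((nonzero_span_atom x hx0).le_iff.mp hle).resolve_left hNne
  have hxN : x ∈ ndeg N := hNx ▸ Submodule.mem_span_singleton_self x
  exact ⟨N, hxN, hNx, hN, (hintegral hxN).2⟩

/-- let `A` be a finite dimensional connected `ℕ`-graded braided Hopf
algebra (axiomatized by an internal grading, a counit vanishing in positive degrees,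
connectedness `A⁰ = k·1`, and the fact that left integrals are unique up to scalar).
If `x` is a nonzero left integral then `x` is homogeneous of some degree `m`,
`A^m = k·x`, `A^{m'} = 0` for `m' > m`, and `x` is also a right integral. -/
theorem stmt9 (k : Type*) [Field k] (A : Type*) [Ring A] [Algebra k A]
    (ndeg : ℕ → Submodule k A)
    (hinternal : DirectSum.IsInternal ndeg)
    (hone : (1 : A) ∈ ndeg 0)
    (hmul : ∀ (m n : ℕ) (a b : A), a ∈ ndeg m → b ∈ ndeg n → a * b ∈ ndeg (m + n))
    (hconn : ndeg 0 = Submodule.span k {(1 : A)})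
    (ε : A →ₐ[k] k)
    (hε : ∀ n > 0, ∀ a ∈ ndeg n, ε a = 0)
    [FiniteDimensional k A]
    (huniq : ∀ x y : A, IsLeftIntegral ε x → IsLeftIntegral ε y → x ≠ 0 →
      ∃ c : k, y = c • x)
    (x : A) (hx0 : x ≠ 0) (hx : IsLeftIntegral ε x) :
    ∃ m : ℕ, x ∈ ndeg m ∧ ndeg m = Submodule.span k {x} ∧
      (∀ m' : ℕ, m < m' → ndeg m' = ⊥) ∧ IsRightIntegral ε x :=
  stmt9_general k A ndeg hinternal hmul hconn ε hε huniq x hx0 hx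
end
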